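/- Let fₙ : ℝ → ℝ be L-Lipschitz nondecreasing functions with fₙ(t+2π) = fₙ(t) + l, converging uniformly to f, and let g be an l-periodic C¹ arc-length parametrization of a Dini-smooth Jordan curve. Then the functions T[fₙ] converge uniformly on [0, 2π] to T[f]; in particular T[f] is continuous. -/

import Mathlib

/-!
In the variable `u = t - τ ∈ [-π, π]` the kernel is
`K(a, b) = ∫_a^b Re[conj(g'(v) - g'(a)) · i g'(a)] dv`, so `|K(a, b)| ≤ ω(|b - a|) |b - a|`,
while `2 sin²(u/2) ≥ 2u²/π²`. Hence for all `L`-Lipschitz `h` the integrand of `T[h](τ)` is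
dominated by one function of `|u|`, integrable by the Dini condition, and the part `|u| < δ` of
the integral is uniformly small. For `|u| ≥ δ` the integrand depends uniformly continuously on
`h` in the sup norm, since `g` is 1-Lipschitz and `g'` is uniformly continuous (by periodicity).
So `‖h₁ - h₂‖∞ ≤ η` forces `|T[h₁] - T[h₂]| ≤ ε` everywhere: applied to `fₙ` and `f` this is
the uniform convergence, applied to `f` and a translate `f (· + c)` it is the continuity of `T[f]`.
-/

open MeasureTheory Set Real Filter

/-- The kernel `K(s,t) = Re[ conj(g(t) − g(s)) · i g'(s) ]`. -/
noncomputable def Kker (g : ℝ → ℂ) (s t : ℝ) : ℝ :=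
  ((starRingEnd ℂ) (g t - g s) * (Complex.I * deriv g s)).re

/-- The operator `T[f](τ) = ∫₀^{2π} K(f(τ), f(t)) / (2 sin²((t−τ)/2)) dt`. -/
noncomputable def Topf (g : ℝ → ℂ) (f : ℝ → ℝ) (τ : ℝ) : ℝ :=
  ∫ t in (0:ℝ)..(2 * π), Kker g (f τ) (f t) / (2 * Real.sin ((t - τ) / 2) ^ 2)

theorem Function.Periodic.uniformContinuous_of_continuous {E : Type*} [PseudoMetricSpace E]
    {h : ℝ → E} {l : ℝ} (hl : 0 < l) (hp : Function.Periodic h l) (hc : Continuous h) :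
    UniformContinuous h := by
  have : Fact (0 < l) := ⟨hl⟩
  have hlift : Continuous (hp.lift : AddCircle l → E) :=
    (QuotientAddGroup.isQuotientMap_mk _).continuous_iff.2 hc
  have hmk : UniformContinuous ((↑) : ℝ → AddCircle l) :=
    (QuotientAddGroup.mk' _).uniformContinuous_of_continuousAt_zero
      QuotientAddGroup.continuous_mk.continuousAt
  exact (CompactSpace.uniformContinuous_of_continuous hlift).comp hmk

theorem intervalIntegral.integral_neg_self_eq_integral_add_comp_neg {E : Type*}
    [NormedAddCommGroup E] [NormedSpace ℝ E] {F : ℝ → E} {a : ℝ}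
    (h₁ : IntervalIntegrable F volume 0 a)
    (h₂ : IntervalIntegrable (fun u => F (-u)) volume 0 a) :
    ∫ u in (-a)..a, F u = ∫ u in 0..a, (F u + F (-u)) := by
  have h₂' : IntervalIntegrable F volume (-a) 0 := by
    simpa using ((IntervalIntegrable.iff_comp_neg (f := fun u => F (-u))).1 h₂).symm
  rw [intervalIntegral.integral_add h₁ h₂, intervalIntegral.integral_comp_neg, neg_zero,
    ← intervalIntegral.integral_add_adjacent_intervals h₂' h₁, add_comm]

theorem exists_intervalIntegral_le {G : ℝ → ℝ} {a ε : ℝ} (ha : 0 < a)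
    (hG : IntervalIntegrable G volume 0 a) (hε : 0 < ε) :
    ∃ δ ∈ Ioc 0 a, ∫ u in 0..δ, G u ≤ ε := by
  have hcont : ContinuousWithinAt (fun x => ∫ u in 0..x, G u) (Ioc 0 a) 0 :=
    ((intervalIntegral.continuousOn_primitive_interval ((intervalIntegrable_iff' (f := G)).1 hG)) 0
      left_mem_uIcc).mono (by rw [uIcc_of_le ha.le]; exact Ioc_subset_Icc_self)
  have hsmall := hcont.eventually (gt_mem_nhds (by simpa using hε))
  rw [nhdsWithin_Ioc_eq_nhdsGT ha] at hsmall
  obtain ⟨δ, hδ, hδa⟩ := (hsmall.and (Ioc_mem_nhdsGT ha)).exists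
  exact ⟨δ, hδa, hδ.le⟩

theorem abs_intervalIntegral_le_of_near_far {F G : ℝ → ℝ} {a δ C : ℝ} (hδ : 0 ≤ δ)
    (hδa : δ ≤ a) (hF : IntervalIntegrable F volume 0 a) (hG : IntervalIntegrable G volume 0 δ)
    (hnear : ∀ u ∈ Ioc 0 δ, |F u| ≤ G u) (hfar : ∀ u ∈ Ioc δ a, |F u| ≤ C) :
    |∫ u in 0..a, F u| ≤ (∫ u in 0..δ, G u) + C * (a - δ) := by
  have hsub : ∀ {c d}, 0 ≤ c → c ≤ d → d ≤ a → IntervalIntegrable F volume c d :=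
    fun hc hcd hd => hF.mono_set <| by
      rw [uIcc_of_le hcd, uIcc_of_le (hc.trans (hcd.trans hd))]; exact Icc_subset_Icc hc hd
  rw [← intervalIntegral.integral_add_adjacent_intervals (hsub le_rfl hδ hδa) (hsub hδ hδa le_rfl)]
  refine (abs_add_le _ _).trans (add_le_add ?_ ?_)
  · rw [← Real.norm_eq_abs]
    exact intervalIntegral.norm_integral_le_of_norm_le hδ (.of_forall hnear) hG
  · rw [← Real.norm_eq_abs, ← abs_of_nonneg (sub_nonneg.2 hδa)]
    exact intervalIntegral.norm_integral_le_of_norm_le_const fun u hu =>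
      hfar u (by rwa [uIoc_of_le hδa] at hu)

theorem abs_re_conj_mul_le (z w : ℂ) : |((starRingEnd ℂ) z * w).re| ≤ ‖z‖ * ‖w‖ :=
  (Complex.abs_re_le_norm _).trans_eq (by rw [norm_mul, RCLike.norm_conj])

theorem sq_div_pi_le_sin_half_sq {u : ℝ} (hu : |u| ≤ π) : (u / π) ^ 2 ≤ sin (u / 2) ^ 2 := by
  have jordan : ∀ v, 0 ≤ v → v ≤ π → v / π ≤ sin (v / 2) := fun v h0 h1 => by
    convert mul_le_sin (x := v / 2) (by linarith) (by linarith) using 1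
    field_simp
  rcases le_total 0 u with h | h
  · exact pow_le_pow_left₀ (by positivity) (jordan u h (by rwa [abs_of_nonneg h] at hu)) 2
  · have := pow_le_pow_left₀ (div_nonneg (neg_nonneg.2 h) pi_pos.le)
      (jordan (-u) (by linarith) (by rwa [abs_of_nonpos h] at hu)) 2
    simpa [neg_div, sin_neg] using this

theorem sin_half_sq_pos {u : ℝ} (h0 : u ≠ 0) (hu : |u| ≤ π) : 0 < sin (u / 2) ^ 2 :=
  (by positivity : 0 < (u / π) ^ 2).trans_le (sq_div_pi_le_sin_half_sq hu)

theorem sin_half_sq_le_of_le_abs {δ u : ℝ} (hδ : 0 ≤ δ) (hδu : δ ≤ |u|) (hu : |u| ≤ π) :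
    sin (δ / 2) ^ 2 ≤ sin (u / 2) ^ 2 := by
  have heven : sin (u / 2) ^ 2 = sin (|u| / 2) ^ 2 := by
    rcases abs_cases u with ⟨h, _⟩ | ⟨h, _⟩ <;> simp [h, neg_div, sin_neg]
  rw [heven]
  exact pow_le_pow_left₀ (sin_nonneg_of_nonneg_of_le_pi (by linarith) (by linarith))
    (sin_le_sin_of_le_of_le_pi_div_two (by linarith) (by linarith) (by linarith)) 2

/-- The integrand of `Topf g h τ` in the variable `u = t - τ`, which puts the singularity
at `u = 0`. -/
noncomputable def Tintegrand (g : ℝ → ℂ) (h : ℝ → ℝ) (τ u : ℝ) : ℝ :=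
  Kker g (h τ) (h (τ + u)) / (2 * sin (u / 2) ^ 2)

noncomputable def Tcentered (g : ℝ → ℂ) (h : ℝ → ℝ) (τ : ℝ) : ℝ :=
  ∫ u in (-π)..π, Tintegrand g h τ u

/-- A bound for `|Tintegrand g h τ u|` at `r = |u|`, uniform over `L`-Lipschitz `h`: the first
term comes from the Dini modulus `ω` where `L r ≤ k`, the second from `|K(a, b)| ≤ 2 |b - a|`
where `L r > k`. -/
noncomputable def Tmajorant (ω : ℝ → ℝ) (k L r : ℝ) : ℝ :=
  π ^ 2 * L ^ 2 / 2 * (Ioc 0 k).indicator (fun v => ω v / v) (L * r) + π ^ 2 * L ^ 2 / k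

section

variable {g : ℝ → ℂ} {ω : ℝ → ℝ} {k : ℝ}

theorem Kker_eq_integral (hg : ContDiff ℝ 1 g) (a b : ℝ) :
    Kker g a b =
      ∫ u in a..b, ((starRingEnd ℂ) (deriv g u - deriv g a) * (Complex.I * deriv g a)).re := by
  set w := Complex.I * deriv g a
  -- `Re[conj z · i z] = 0`, so subtracting `g'(a)` does not change the integrand
  have hre : ∀ u, ((starRingEnd ℂ) (deriv g u - deriv g a) * w).re
      = ((starRingEnd ℂ) (deriv g u) * w).re := by
    intro u
    simp only [w, map_sub, sub_mul, Complex.sub_re, Complex.mul_re, Complex.mul_im,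
      Complex.conj_re, Complex.conj_im, Complex.I_re, Complex.I_im]
    ring
  have hderiv : ∀ x, HasDerivAt (fun y => ((starRingEnd ℂ) (g y - g a) * w).re)
      ((starRingEnd ℂ) (deriv g x) * w).re x := fun x =>
    Complex.reCLM.hasFDerivAt.comp_hasDerivAt x
      ((((hg.differentiable one_ne_zero) x).hasDerivAt.sub_const (g a)).star.mul_const w)
  have hcont : Continuous fun u => ((starRingEnd ℂ) (deriv g u) * w).re :=
    Complex.continuous_re.comp
      ((Complex.continuous_conj.comp (hg.continuous_deriv le_rfl)).mul continuous_const)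
  rw [intervalIntegral.integral_congr fun u _ => hre u,
    intervalIntegral.integral_eq_sub_of_hasDerivAt (fun x _ => hderiv x)
      (hcont.intervalIntegrable a b)]
  simp [Kker, w]

theorem abs_Kker_le (hg : ContDiff ℝ 1 g) (hunit : ∀ s, ‖deriv g s‖ = 1) {a b C : ℝ}
    (hC : ∀ u ∈ uIcc a b, ‖deriv g u - deriv g a‖ ≤ C) :
    |Kker g a b| ≤ C * |b - a| := by
  rw [Kker_eq_integral hg, ← Real.norm_eq_abs]
  refine intervalIntegral.norm_integral_le_of_norm_le_const fun u hu => ?_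
  calc _ ≤ ‖deriv g u - deriv g a‖ * ‖Complex.I * deriv g a‖ := abs_re_conj_mul_le _ _
    _ ≤ C := by simpa [hunit] using hC u (uIoc_subset_uIcc hu)

theorem abs_Kker_le_modulus (hg : ContDiff ℝ 1 g) (hunit : ∀ s, ‖deriv g s‖ = 1)
    (hω : ∀ δ ≥ (0:ℝ), ∀ x y : ℝ, |x - y| ≤ δ → ‖deriv g x - deriv g y‖ ≤ ω δ)
    {a b δ : ℝ} (hδ : |b - a| ≤ δ) :
    |Kker g a b| ≤ ω δ * |b - a| :=
  abs_Kker_le hg hunit fun u hu =>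
    hω δ ((abs_nonneg _).trans hδ) u a ((abs_sub_left_of_mem_uIcc hu).trans hδ)

theorem abs_Kker_le_two_mul (hg : ContDiff ℝ 1 g) (hunit : ∀ s, ‖deriv g s‖ = 1) (a b : ℝ) :
    |Kker g a b| ≤ 2 * |b - a| :=
  abs_Kker_le hg hunit fun u _ =>
    (norm_sub_le _ _).trans_eq (by rw [hunit, hunit]; norm_num)

theorem abs_Kker_sub_Kker_le (hunit : ∀ s, ‖deriv g s‖ = 1) (a b a' b' : ℝ) :
    |Kker g a b - Kker g a' b'|
      ≤ ‖g b - g b'‖ + ‖g a - g a'‖ + ‖g b' - g a'‖ * ‖deriv g a - deriv g a'‖ := by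
  have hsplit : Kker g a b - Kker g a' b'
      = ((starRingEnd ℂ) ((g b - g b') - (g a - g a')) * (Complex.I * deriv g a)).re
        + ((starRingEnd ℂ) (g b' - g a') * (Complex.I * (deriv g a - deriv g a'))).re := by
    simp only [Kker, ← Complex.sub_re, ← Complex.add_re, map_sub]
    ring_nf
  rw [hsplit]
  refine (abs_add_le _ _).trans (add_le_add ?_ ?_)
  · refine (abs_re_conj_mul_le _ _).trans ?_
    simpa [hunit] using norm_sub_le (g b - g b') (g a - g a')
  · exact (abs_re_conj_mul_le _ _).trans_eq (by simp)

theorem exists_abs_Kker_sub_le (hg : ContDiff ℝ 1 g) (hunit : ∀ s, ‖deriv g s‖ = 1)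
    (hUC : UniformContinuous (deriv g)) (R : ℝ) {c : ℝ} (hc : 0 < c) :
    ∃ η > 0, ∀ a b a' b' : ℝ, |a - a'| ≤ η → |b - b'| ≤ η → |b' - a'| ≤ R →
      |Kker g a b - Kker g a' b'| ≤ c := by
  have hlip : ∀ x y, ‖g x - g y‖ ≤ |x - y| := by
    have : LipschitzWith 1 g := lipschitzWith_of_nnnorm_deriv_le
      (hg.differentiable one_ne_zero) fun x => by simp [← NNReal.coe_le_coe, hunit]
    simpa [dist_eq_norm, Real.dist_eq] using this.dist_le_mul
  obtain ⟨δ, hδ, hUCδ⟩ := Metric.uniformContinuous_iff.1 hUC (c / (2 * (|R| + 1))) (by positivity)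
  refine ⟨min (δ / 2) (c / 4), by positivity, fun a b a' b' ha hb hR => ?_⟩
  have hder : ‖deriv g a - deriv g a'‖ ≤ c / (2 * (|R| + 1)) := by
    rw [← dist_eq_norm]
    refine (hUCδ ?_).le
    rw [Real.dist_eq]
    linarith [min_le_left (δ / 2) (c / 4)]
  have hprod : ‖g b' - g a'‖ * ‖deriv g a - deriv g a'‖ ≤ c / 2 := by
    calc _ ≤ (|R| + 1) * (c / (2 * (|R| + 1))) :=
          mul_le_mul ((hlip _ _).trans (hR.trans ((le_abs_self R).trans (by linarith))))
            hder (norm_nonneg _) (by positivity)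
      _ = c / 2 := by field_simp
  linarith [abs_Kker_sub_Kker_le hunit a b a' b', hlip b b', hlip a a',
    min_le_right (δ / 2) (c / 4)]

theorem Topf_eq_Tcentered {l : ℝ} (hper : ∀ s, g (s + l) = g s) {h : ℝ → ℝ}
    (hqp : ∀ t, h (t + 2 * π) = h t + l) (τ : ℝ) :
    Topf g h τ = Tcentered g h τ := by
  set F : ℝ → ℝ := fun t => Kker g (h τ) (h t) / (2 * sin ((t - τ) / 2) ^ 2)
  have hF : Function.Periodic F (2 * π) := fun t => by
    have hsin : sin ((t + 2 * π - τ) / 2) ^ 2 = sin ((t - τ) / 2) ^ 2 := by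
      rw [show (t + 2 * π - τ) / 2 = (t - τ) / 2 + π by ring, sin_add_pi, neg_sq]
    simp only [F, Kker, hqp, hper, hsin]
  have hshift := intervalIntegral.integral_comp_add_left F τ (a := -π) (b := π)
  rw [Topf, ← zero_add (2 * π), hF.intervalIntegral_add_eq 0 (τ + -π),
    show τ + -π + 2 * π = τ + π by ring, ← hshift]
  simp [F, Tcentered, Tintegrand]

theorem Tcentered_comp_add_const (h : ℝ → ℝ) (c τ : ℝ) :
    Tcentered g (fun t => h (t + c)) τ = Tcentered g h (τ + c) := by
  simp only [Tcentered, Tintegrand, add_right_comm τ _ c]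

theorem measurable_Tintegrand (hg : ContDiff ℝ 1 g) {h : ℝ → ℝ} (hh : Continuous h) (τ : ℝ) :
    Measurable (Tintegrand g h τ) := by
  have hK : Continuous fun u => Kker g (h τ) (h (τ + u)) := by
    unfold Kker
    fun_prop
  exact hK.measurable.div (by fun_prop)

theorem abs_Tintegrand_sub_le {h₁ h₂ : ℝ → ℝ} {τ u δ c : ℝ} (hδ : 0 < δ) (hδu : δ ≤ |u|)
    (hu : |u| ≤ π)
    (hK : |Kker g (h₁ τ) (h₁ (τ + u)) - Kker g (h₂ τ) (h₂ (τ + u))| ≤ c) :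
    |Tintegrand g h₁ τ u - Tintegrand g h₂ τ u| ≤ c / (2 * sin (δ / 2) ^ 2) := by
  have hδ' : 0 < sin (δ / 2) ^ 2 := sin_half_sq_pos hδ.ne' (by rw [abs_of_pos hδ]; linarith)
  have hu' : 0 < sin (u / 2) ^ 2 :=
    sin_half_sq_pos (by rintro rfl; rw [abs_zero] at hδu; linarith) hu
  rw [Tintegrand, Tintegrand, ← sub_div, abs_div, abs_of_pos (by linarith : (0:ℝ) < 2 * _)]
  exact div_le_div₀ ((abs_nonneg _).trans hK) hK (by linarith)
    (by linarith [sin_half_sq_le_of_le_abs hδ.le hδu hu])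

theorem intervalIntegrable_Tmajorant (hωk : IntegrableOn (fun t => ω t / t) (Ioc 0 k))
    {L : ℝ} (hL : 0 < L) (a b : ℝ) :
    IntervalIntegrable (Tmajorant ω k L) volume a b := by
  have hind : Integrable fun r => (Ioc 0 k).indicator (fun v => ω v / v) (L * r) :=
    ((integrable_indicator_iff measurableSet_Ioc).2 hωk).comp_mul_left' hL.ne'
  exact (hind.const_mul _).intervalIntegrable.add intervalIntegrable_const

theorem Tmajorant_nonneg (hω : ∀ δ ≥ (0:ℝ), ∀ x y : ℝ, |x - y| ≤ δ → ‖deriv g x - deriv g y‖ ≤ ω δ)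
    (hk : 0 < k) (L r : ℝ) : 0 ≤ Tmajorant ω k L r := by
  have := indicator_nonneg (fun v (hv : v ∈ Ioc 0 k) =>
    div_nonneg ((norm_nonneg _).trans (hω v hv.1.le 0 0 (by simpa using hv.1.le))) hv.1.le) (L * r)
  unfold Tmajorant
  positivity

theorem abs_Kker_le_Tmajorant_mul (hg : ContDiff ℝ 1 g) (hunit : ∀ s, ‖deriv g s‖ = 1)
    (hω : ∀ δ ≥ (0:ℝ), ∀ x y : ℝ, |x - y| ≤ δ → ‖deriv g x - deriv g y‖ ≤ ω δ)
    (hk : 0 < k) {L r a b : ℝ} (hL : 0 < L) (hr : 0 < r) (hab : |b - a| ≤ L * r) :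
    |Kker g a b| ≤ Tmajorant ω k L r * (2 * r ^ 2 / π ^ 2) := by
  have hπ := pi_pos
  rcases le_or_gt (L * r) k with hLr | hLr
  · have hmem : L * r ∈ Ioc 0 k := ⟨by positivity, hLr⟩
    have hωLr : 0 ≤ ω (L * r) :=
      (norm_nonneg _).trans (hω _ (by positivity) 0 0 (by simp; positivity))
    calc |Kker g a b| ≤ ω (L * r) * (L * r) :=
          (abs_Kker_le_modulus hg hunit hω hab).trans (mul_le_mul_of_nonneg_left hab hωLr)
      _ = π ^ 2 * L ^ 2 / 2 * (ω (L * r) / (L * r)) * (2 * r ^ 2 / π ^ 2) := by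
          field_simp
      _ ≤ Tmajorant ω k L r * (2 * r ^ 2 / π ^ 2) := by
          rw [Tmajorant, indicator_of_mem hmem]
          nlinarith [(by positivity : 0 ≤ π ^ 2 * L ^ 2 / k * (2 * r ^ 2 / π ^ 2))]
  · have hnot : L * r ∉ Ioc 0 k := fun hmem => hmem.2.not_gt hLr
    calc |Kker g a b| ≤ 2 * (L * r) :=
          (abs_Kker_le_two_mul hg hunit _ _).trans (by linarith)
      _ ≤ 2 * L ^ 2 * r ^ 2 / k := by
          rw [le_div_iff₀ hk]; nlinarith
      _ = Tmajorant ω k L r * (2 * r ^ 2 / π ^ 2) := by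
          rw [Tmajorant, indicator_of_notMem hnot, mul_zero, zero_add]
          field_simp

theorem abs_Tintegrand_le_Tmajorant (hg : ContDiff ℝ 1 g) (hunit : ∀ s, ‖deriv g s‖ = 1)
    (hω : ∀ δ ≥ (0:ℝ), ∀ x y : ℝ, |x - y| ≤ δ → ‖deriv g x - deriv g y‖ ≤ ω δ)
    (hk : 0 < k) {L : NNReal} (hL : 0 < L) {h : ℝ → ℝ} (hh : LipschitzWith L h)
    {τ u : ℝ} (hu0 : u ≠ 0) (hu : |u| ≤ π) :
    |Tintegrand g h τ u| ≤ Tmajorant ω k L |u| := by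
  have hdist : |h (τ + u) - h τ| ≤ L * |u| := by
    simpa [Real.dist_eq] using hh.dist_le_mul (τ + u) τ
  have hden : 2 * |u| ^ 2 / π ^ 2 ≤ 2 * sin (u / 2) ^ 2 := by
    have := sq_div_pi_le_sin_half_sq hu
    rw [div_pow, ← sq_abs u] at this
    rw [mul_div_assoc]
    linarith
  have hsin := sin_half_sq_pos hu0 hu
  rw [Tintegrand, abs_div, abs_of_pos (by linarith : (0:ℝ) < 2 * sin (u / 2) ^ 2),
    div_le_iff₀ (by linarith)]
  exact (abs_Kker_le_Tmajorant_mul hg hunit hω hk hL (abs_pos.2 hu0) hdist).trans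
    (mul_le_mul_of_nonneg_left hden (Tmajorant_nonneg hω hk _ _))

theorem abs_Tintegrand_add_comp_neg_le (hg : ContDiff ℝ 1 g) (hunit : ∀ s, ‖deriv g s‖ = 1)
    (hω : ∀ δ ≥ (0:ℝ), ∀ x y : ℝ, |x - y| ≤ δ → ‖deriv g x - deriv g y‖ ≤ ω δ)
    (hk : 0 < k) {L : NNReal} (hL : 0 < L) {h : ℝ → ℝ} (hh : LipschitzWith L h) (τ : ℝ)
    {u : ℝ} (hu : u ∈ Ioc 0 π) :
    |Tintegrand g h τ u + Tintegrand g h τ (-u)| ≤ 2 * Tmajorant ω k L u := by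
  have hbound : ∀ v, |v| = u → |Tintegrand g h τ v| ≤ Tmajorant ω k L u := fun v hv =>
    hv ▸ abs_Tintegrand_le_Tmajorant hg hunit hω hk hL hh (abs_pos.1 (hv ▸ hu.1)) (hv ▸ hu.2)
  linarith [abs_add_le (Tintegrand g h τ u) (Tintegrand g h τ (-u)),
    hbound u (abs_of_pos hu.1), hbound (-u) (by rw [abs_neg, abs_of_pos hu.1])]

theorem intervalIntegrable_Tintegrand (hg : ContDiff ℝ 1 g) (hunit : ∀ s, ‖deriv g s‖ = 1)
    (hω : ∀ δ ≥ (0:ℝ), ∀ x y : ℝ, |x - y| ≤ δ → ‖deriv g x - deriv g y‖ ≤ ω δ)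
    (hk : 0 < k) (hωk : IntegrableOn (fun t => ω t / t) (Ioc 0 k)) {L : NNReal} (hL : 0 < L)
    {h : ℝ → ℝ} (hh : LipschitzWith L h) (τ : ℝ) :
    IntervalIntegrable (Tintegrand g h τ) volume 0 π ∧
      IntervalIntegrable (fun u => Tintegrand g h τ (-u)) volume 0 π := by
  have hΦ := intervalIntegrable_Tmajorant hωk (NNReal.coe_pos.2 hL) 0 π
  have hmeas := measurable_Tintegrand hg hh.continuous τ
  have hbound : ∀ v, |v| ∈ Ioc 0 π → ‖Tintegrand g h τ v‖ ≤ Tmajorant ω k L |v| :=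
    fun v hv => abs_Tintegrand_le_Tmajorant hg hunit hω hk hL hh (abs_pos.1 hv.1) hv.2
  constructor
  · refine hΦ.mono_fun' hmeas.aestronglyMeasurable ?_
    filter_upwards [ae_restrict_mem measurableSet_uIoc] with u hu
    rw [uIoc_of_le pi_pos.le] at hu
    simpa [abs_of_pos hu.1] using hbound u (by rwa [abs_of_pos hu.1])
  · refine hΦ.mono_fun' (hmeas.comp measurable_neg).aestronglyMeasurable ?_
    filter_upwards [ae_restrict_mem measurableSet_uIoc] with u hu
    rw [uIoc_of_le pi_pos.le] at hu
    simpa [abs_of_pos hu.1] using hbound (-u) (by rwa [abs_neg, abs_of_pos hu.1])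

theorem exists_abs_Tcentered_sub_le (hg : ContDiff ℝ 1 g) (hunit : ∀ s, ‖deriv g s‖ = 1)
    (hUC : UniformContinuous (deriv g))
    (hω : ∀ δ ≥ (0:ℝ), ∀ x y : ℝ, |x - y| ≤ δ → ‖deriv g x - deriv g y‖ ≤ ω δ)
    (hk : 0 < k) (hωk : IntegrableOn (fun t => ω t / t) (Ioc 0 k)) {L : NNReal} (hL : 0 < L)
    {ε : ℝ} (hε : 0 < ε) :
    ∃ η > 0, ∀ h₁ h₂ : ℝ → ℝ, LipschitzWith L h₁ → LipschitzWith L h₂ →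
      (∀ t, |h₁ t - h₂ t| ≤ η) → ∀ τ, |Tcentered g h₁ τ - Tcentered g h₂ τ| ≤ ε := by
  set Φ := Tmajorant ω k L
  have hΦ := intervalIntegrable_Tmajorant hωk (NNReal.coe_pos.2 hL)
  obtain ⟨δ, ⟨hδ, hδπ⟩, hΦδ⟩ :=
    exists_intervalIntegral_le pi_pos (hΦ 0 π) (by positivity : 0 < ε / 8)
  set D := 2 * sin (δ / 2) ^ 2
  have hD : 0 < D := by
    have := sin_half_sq_pos hδ.ne' (by rwa [abs_of_pos hδ])
    positivity
  -- the size of the kernel perturbation for which `δ ≤ |u| ≤ π` contributes at most `ε / 2`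
  set c := ε * D / (4 * π)
  obtain ⟨η, hη, hK⟩ := exists_abs_Kker_sub_le hg hunit hUC (L * π) (c := c) (by positivity)
  refine ⟨η, hη, fun h₁ h₂ hh₁ hh₂ hclose τ => ?_⟩
  obtain ⟨i₁, i₁'⟩ := intervalIntegrable_Tintegrand hg hunit hω hk hωk hL hh₁ τ
  obtain ⟨i₂, i₂'⟩ := intervalIntegrable_Tintegrand hg hunit hω hk hωk hL hh₂ τ
  set A₁ := Tintegrand g h₁ τ
  set A₂ := Tintegrand g h₂ τ
  set F := fun u => (A₁ u + A₁ (-u)) - (A₂ u + A₂ (-u))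
  have hfold : Tcentered g h₁ τ - Tcentered g h₂ τ = ∫ u in 0..π, F u := by
    rw [Tcentered, Tcentered, intervalIntegral.integral_neg_self_eq_integral_add_comp_neg i₁ i₁',
      intervalIntegral.integral_neg_self_eq_integral_add_comp_neg i₂ i₂',
      intervalIntegral.integral_sub (i₁.add i₁') (i₂.add i₂')]
  have hnear : ∀ u ∈ Ioc 0 δ, |F u| ≤ 4 * Φ u := fun u hu => by
    have hu' : u ∈ Ioc 0 π := ⟨hu.1, hu.2.trans hδπ⟩
    linarith [abs_sub (A₁ u + A₁ (-u)) (A₂ u + A₂ (-u)),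
      abs_Tintegrand_add_comp_neg_le hg hunit hω hk hL hh₁ τ hu',
      abs_Tintegrand_add_comp_neg_le hg hunit hω hk hL hh₂ τ hu']
  have hfar : ∀ u ∈ Ioc δ π, |F u| ≤ 2 * (c / D) := by
    have hv : ∀ v, δ ≤ |v| → |v| ≤ π → |A₁ v - A₂ v| ≤ c / D := by
      intro v hδv hvπ
      refine abs_Tintegrand_sub_le hδ hδv hvπ (hK _ _ _ _ (hclose τ) (hclose _) ?_)
      calc |h₂ (τ + v) - h₂ τ| ≤ L * |v| := by
            simpa [Real.dist_eq] using hh₂.dist_le_mul (τ + v) τ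
        _ ≤ L * π := by gcongr
    intro u hu
    have hu' : |u| = u := abs_of_pos (hδ.trans hu.1)
    have hplus := hv u (by rw [hu']; exact hu.1.le) (by rw [hu']; exact hu.2)
    have hminus := hv (-u) (by rw [abs_neg, hu']; exact hu.1.le)
      (by rw [abs_neg, hu']; exact hu.2)
    have : F u = (A₁ u - A₂ u) + (A₁ (-u) - A₂ (-u)) := by simp only [F]; ring
    rw [this]
    linarith [abs_add_le (A₁ u - A₂ u) (A₁ (-u) - A₂ (-u))]
  have hcD : 2 * (c / D) * (π - δ) ≤ ε / 2 := by
    have : 2 * (c / D) = ε / (2 * π) := by simp only [c]; field_simp; ring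
    rw [this, div_mul_eq_mul_div, div_le_iff₀ (by positivity)]
    nlinarith
  rw [hfold]
  calc |∫ u in 0..π, F u| ≤ (∫ u in 0..δ, 4 * Φ u) + 2 * (c / D) * (π - δ) :=
        abs_intervalIntegral_le_of_near_far hδ.le hδπ ((i₁.add i₁').sub (i₂.add i₂'))
          ((hΦ 0 δ).const_mul 4) hnear hfar
    _ ≤ ε := by rw [intervalIntegral.integral_const_mul]; linarith

theorem tendstoUniformly_Tcentered (hg : ContDiff ℝ 1 g) (hunit : ∀ s, ‖deriv g s‖ = 1)
    (hUC : UniformContinuous (deriv g))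
    (hω : ∀ δ ≥ (0:ℝ), ∀ x y : ℝ, |x - y| ≤ δ → ‖deriv g x - deriv g y‖ ≤ ω δ)
    (hk : 0 < k) (hωk : IntegrableOn (fun t => ω t / t) (Ioc 0 k)) {L : NNReal} (hL : 0 < L)
    {ι : Type*} {p : Filter ι} {f : ℝ → ℝ} {fn : ι → ℝ → ℝ} (hf : LipschitzWith L f)
    (hfn : ∀ n, LipschitzWith L (fn n)) (hconv : TendstoUniformly fn f p) :
    TendstoUniformly (fun n => Tcentered g (fn n)) (Tcentered g f) p := by
  rw [Metric.tendstoUniformly_iff] at hconv ⊢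
  intro ε hε
  obtain ⟨η, hη, hT⟩ := exists_abs_Tcentered_sub_le hg hunit hUC hω hk hωk hL (half_pos hε)
  filter_upwards [hconv η hη] with n hn τ
  rw [Real.dist_eq]
  exact (hT f (fn n) hf (hfn n) (fun t => by simpa [Real.dist_eq] using (hn t).le) τ).trans_lt
    (half_lt_self hε)

theorem continuous_Tcentered (hg : ContDiff ℝ 1 g) (hunit : ∀ s, ‖deriv g s‖ = 1)
    (hUC : UniformContinuous (deriv g))
    (hω : ∀ δ ≥ (0:ℝ), ∀ x y : ℝ, |x - y| ≤ δ → ‖deriv g x - deriv g y‖ ≤ ω δ)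
    (hk : 0 < k) (hωk : IntegrableOn (fun t => ω t / t) (Ioc 0 k)) {L : NNReal} (hL : 0 < L)
    {f : ℝ → ℝ} (hf : LipschitzWith L f) :
    Continuous (Tcentered g f) := by
  rw [Metric.continuous_iff]
  intro b ε hε
  obtain ⟨η, hη, hT⟩ := exists_abs_Tcentered_sub_le hg hunit hUC hω hk hωk hL (half_pos hε)
  refine ⟨η / L, by positivity, fun a hab => ?_⟩
  -- `T[f]` at `a` is `T` of the translate `f (· + (a - b))` at `b`
  have hshift : LipschitzWith L fun t => f (t + (a - b)) := fun x y => by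
    simpa only [edist_add_right] using hf (x + (a - b)) (y + (a - b))
  have hclose : ∀ t, |f (t + (a - b)) - f t| ≤ η := fun t => by
    have := hf.dist_le_mul (t + (a - b)) t
    rw [Real.dist_eq, Real.dist_eq, add_sub_cancel_left] at this
    rw [Real.dist_eq] at hab
    calc _ ≤ L * |a - b| := this
      _ ≤ L * (η / L) := by gcongr
      _ = η := by field_simp
  have := hT _ f hshift hf hclose b
  rw [Tcentered_comp_add_const, add_sub_cancel] at this
  rw [Real.dist_eq]
  exact this.trans_lt (half_lt_self hε)

end

theorem T_uniform_convergence_general (l : ℝ) (hl : 0 < l) (L : NNReal)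
    (g : ℝ → ℂ) (hg : ContDiff ℝ 1 g)
    (hper : ∀ s, g (s + l) = g s)
    (hunit : ∀ s, ‖deriv g s‖ = 1)
    (ω : ℝ → ℝ)
    (hω : ∀ δ ≥ (0:ℝ), ∀ x y : ℝ, |x - y| ≤ δ → ‖deriv g x - deriv g y‖ ≤ ω δ)
    (hωD : ∃ k > (0:ℝ), IntegrableOn (fun t => ω t / t) (Ioc 0 k))
    (f : ℝ → ℝ) (hfl : LipschitzWith L f)
    (hfqp : ∀ t, f (t + 2 * π) = f t + l)
    (fn : ℕ → ℝ → ℝ)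
    (hfnl : ∀ n, LipschitzWith L (fn n))
    (hfnqp : ∀ n t, fn n (t + 2 * π) = fn n t + l)
    (hconv : TendstoUniformly fn f atTop) :
    TendstoUniformlyOn (fun n => Topf g (fn n)) (Topf g f) atTop (Icc 0 (2 * π)) ∧
    ContinuousOn (Topf g f) (Icc 0 (2 * π)) := by
  obtain ⟨k, hk, hωk⟩ := hωD
  have hUC : UniformContinuous (deriv g) :=
    Function.Periodic.uniformContinuous_of_continuous hl
      (fun x => by rw [← deriv_comp_add_const, show (fun y => g (y + l)) = g from funext hper])
      (hg.continuous_deriv le_rfl)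
  have hL : (0 : NNReal) < L + 1 := by positivity
  have hLip : ∀ {h : ℝ → ℝ}, LipschitzWith L h → LipschitzWith (L + 1) h :=
    fun hh => hh.weaken le_self_add
  have hT : ∀ h : ℝ → ℝ, (∀ t, h (t + 2 * π) = h t + l) → Topf g h = Tcentered g h :=
    fun h hqp => funext (Topf_eq_Tcentered hper hqp)
  simp only [hT f hfqp, hT _ (hfnqp _)]
  exact ⟨(tendstoUniformly_Tcentered hg hunit hUC hω hk hωk hL (hLip hfl) (fun n => hLip (hfnl n))
      hconv).tendstoUniformlyOn,
    (continuous_Tcentered hg hunit hUC hω hk hωk hL (hLip hfl)).continuousOn⟩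

/-- If `fₙ → f` uniformly, then `T[fₙ] → T[f]` uniformly on `[0, 2π]`; in particular
`T[f]` is continuous there. -/
theorem T_uniform_convergence (l : ℝ) (hl : 0 < l) (L : NNReal)
    (g : ℝ → ℂ) (hg : ContDiff ℝ 1 g)
    (hper : ∀ s, g (s + l) = g s)
    (hunit : ∀ s, ‖deriv g s‖ = 1)
    (ω : ℝ → ℝ)
    (hω : ∀ δ ≥ (0:ℝ), ∀ x y : ℝ, |x - y| ≤ δ → ‖deriv g x - deriv g y‖ ≤ ω δ)
    (hωD : ∃ k > (0:ℝ), IntegrableOn (fun t => ω t / t) (Ioc 0 k))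
    (f : ℝ → ℝ) (hf : Monotone f) (hfl : LipschitzWith L f)
    (hfqp : ∀ t, f (t + 2 * π) = f t + l)
    (fn : ℕ → ℝ → ℝ) (hfn : ∀ n, Monotone (fn n))
    (hfnl : ∀ n, LipschitzWith L (fn n))
    (hfnqp : ∀ n t, fn n (t + 2 * π) = fn n t + l)
    (hconv : TendstoUniformly fn f atTop) :
    TendstoUniformlyOn (fun n => Topf g (fn n)) (Topf g f) atTop (Icc 0 (2 * π)) ∧
    ContinuousOn (Topf g f) (Icc 0 (2 * π)) :=
  T_uniform_convergence_general l hl L g hg hper hunit ω hω hωD f hfl hfqp fn hfnl hfnqp hconv
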